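/- Let d, m ≥ 1, let 0 < α₁ ≤ α₂ ≤ … ≤ α_m ≤ 1 be reals, and let f = (f₁, …, f_m) : [0,1]^d → ℝ^m satisfy |f_i(x) - f_i(y)| ≤ c ‖x - y‖^{α_i} for all x, y ∈ [0,1]^d and some c > 0. Then the Hausdorff dimension of the graph Gr f([0,1]^d) = { (x, f(x)) : x ∈ [0,1]^d } ⊂ ℝ^{d+m} is at most min{ (d + Σ_{i=1}^j (α_j - α_i)) / α_j (1 ≤ j ≤ m), d + Σ_{i=1}^m (1 - α_i) }. -/

import Mathlib

/-!
Fix `0 < β ≤ 1` and a scale `ε ≤ 1`. The unit cube is covered by `≈ ε^(-d/β)` grid cubes of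
side `ε^(1/β) ≤ ε`; on each of them the `i`-th coordinate of `f` oscillates by `≲ ε^(α i/β)`,
so it is covered by `≲ ε^(-max 0 (1 - α i/β))` intervals of length `ε`. The graph is thus
covered by `≲ ε^(-s)` sets of diameter `≲ ε`, where `s = d/β + ∑ i, max 0 (1 - α i/β)`, which
makes `μH[s]` of the graph finite and so `dimH ≤ s`. Taking `β = α j` (where monotonicity of `α`
turns `s` into the `j`-th term of the minimum) and `β = 1` gives the two bounds.
-/

open MeasureTheory Metric Filter Set

theorem ediam_prod_le {X Y : Type*} [PseudoEMetricSpace X] [PseudoEMetricSpace Y] (s : Set X)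
    (t : Set Y) : ediam (s ×ˢ t) ≤ max (ediam s) (ediam t) :=
  ediam_le fun z hz w hw => by
    rw [Prod.edist_eq]
    exact max_le_max (edist_le_ediam_of_mem hz.1 hw.1) (edist_le_ediam_of_mem hz.2 hw.2)

namespace EuclideanSpace

variable {ι : Type*}

def cube (q : EuclideanSpace ℝ ι) (r : ℝ) : Set (EuclideanSpace ℝ ι) :=
  {z | ∀ i, |z i - q i| ≤ r}

def unitCube (ι : Type*) : Set (EuclideanSpace ℝ ι) :=
  {x | ∀ i, x i ∈ Icc (0 : ℝ) 1}

def gridPoint (a : ι → ℝ) (h : ℝ) (l : ι → ℕ) : EuclideanSpace ℝ ι :=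
  WithLp.toLp 2 fun i => a i + l i * h

theorem cube_mono {q : EuclideanSpace ℝ ι} {r r' : ℝ} (h : r ≤ r') : cube q r ⊆ cube q r' :=
  fun _ hz i => (hz i).trans h

theorem dist_le_of_mem_cube [Fintype ι] {q z : EuclideanSpace ℝ ι} {r : ℝ} (hr : 0 ≤ r)
    (hz : z ∈ cube q r) : dist z q ≤ √(Fintype.card ι) * r := by
  rw [EuclideanSpace.dist_eq]
  calc √(∑ i, dist (z i) (q i) ^ 2) ≤ √(∑ _i : ι, r ^ 2) :=
        Real.sqrt_le_sqrt (Finset.sum_le_sum fun i _ => pow_le_pow_left₀ dist_nonneg (hz i) 2)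
    _ = √(Fintype.card ι) * r := by
        rw [Finset.sum_const, Finset.card_univ, nsmul_eq_mul, Real.sqrt_mul (Nat.cast_nonneg _),
          Real.sqrt_sq hr]

theorem ediam_cube_le [Fintype ι] (q : EuclideanSpace ℝ ι) {r : ℝ} (hr : 0 ≤ r) :
    ediam (cube q r) ≤ ENNReal.ofReal (2 * √(Fintype.card ι) * r) :=
  ediam_le fun z hz w hw => by
    rw [edist_dist]
    refine ENNReal.ofReal_le_ofReal ((dist_triangle_right z w q).trans ?_)
    linarith [dist_le_of_mem_cube hr hz, dist_le_of_mem_cube hr hw]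

theorem exists_mem_cube_gridPoint {M : ι → ℕ} {a : ι → ℝ} {h : ℝ} (hh : 0 < h)
    {y : EuclideanSpace ℝ ι} (hy : ∀ i, 0 ≤ y i - a i ∧ y i - a i ≤ M i * h) :
    ∃ l : ∀ i, Fin (M i + 1), y ∈ cube (gridPoint a h fun i => l i) h := by
  have hfloor (i : ι) : ⌊(y i - a i) / h⌋₊ < M i + 1 :=
    Nat.lt_succ_of_le (Nat.floor_le_of_le ((div_le_iff₀ hh).2 (hy i).2))
  refine ⟨fun i => ⟨_, hfloor i⟩, fun i => abs_le.2 ⟨?_, ?_⟩⟩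
  · have := Nat.floor_le (div_nonneg (hy i).1 hh.le)
    rw [le_div_iff₀ hh] at this
    simp only [gridPoint]
    linarith
  · have := Nat.lt_floor_add_one ((y i - a i) / h)
    rw [div_lt_iff₀ hh] at this
    simp only [gridPoint]
    linarith

theorem exists_mem_cube_gridPoint_unitCube [Fintype ι] {N : ℕ} (hN : 0 < N)
    {x : EuclideanSpace ℝ ι} (hx : x ∈ unitCube ι) :
    ∃ k : ι → Fin (N + 1), gridPoint 0 (N : ℝ)⁻¹ (fun i => k i) ∈ unitCube ι ∧
      x ∈ cube (gridPoint 0 (N : ℝ)⁻¹ fun i => k i) (N : ℝ)⁻¹ := by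
  have hN' : (0 : ℝ) < N := Nat.cast_pos.2 hN
  obtain ⟨k, hk⟩ := exists_mem_cube_gridPoint (M := fun _ => N) (a := 0) (inv_pos.2 hN') (y := x)
    fun i => by simpa [mul_inv_cancel₀ hN'.ne'] using hx i
  refine ⟨k, fun i => ⟨by simp [gridPoint]; positivity, ?_⟩, hk⟩
  simpa [gridPoint, ← div_eq_mul_inv, div_le_one hN'] using Nat.lt_succ_iff.1 (k i).2

theorem ediam_cube_prod_cube_le {κ : Type*} [Fintype ι] [Fintype κ] (p : EuclideanSpace ℝ ι)
    (q : EuclideanSpace ℝ κ) {r : ℝ} (hr : 0 ≤ r) :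
    ediam (cube p r ×ˢ cube q r) ≤
      ENNReal.ofReal (2 * (√(Fintype.card ι) + √(Fintype.card κ)) * r) := by
  have hι := Real.sqrt_nonneg (Fintype.card ι)
  have hκ := Real.sqrt_nonneg (Fintype.card κ)
  refine (ediam_prod_le _ _).trans (max_le ?_ ?_)
  · exact (ediam_cube_le p hr).trans (ENNReal.ofReal_le_ofReal (by nlinarith))
  · exact (ediam_cube_le q hr).trans (ENNReal.ofReal_le_ofReal (by nlinarith))

end EuclideanSpace

theorem dimH_le_of_forall_finset_cover {X : Type*} [EMetricSpace X] [MeasurableSpace X]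
    [BorelSpace X] {s : Set X} {A B C : ℝ} (hA : 0 ≤ A) (hB : 0 ≤ B)
    (hcover : ∀ ε ∈ Ioc (0 : ℝ) 1, ∃ T : Finset (Set X), s ⊆ ⋃₀ ↑T ∧
      (∀ t ∈ T, ediam t ≤ ENNReal.ofReal (A * ε)) ∧ (T.card : ℝ) ≤ C * ε ^ (-B)) :
    dimH s ≤ ENNReal.ofReal B := by
  set ε : ℕ → ℝ := fun n => 1 / (n + 1)
  have hε (n : ℕ) : ε n ∈ Ioc (0 : ℝ) 1 :=
    ⟨by positivity, div_le_one_of_le₀ (by linarith [n.cast_nonneg (α := ℝ)]) (by positivity)⟩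
  choose T hTcover hTdiam hTcard using fun n => hcover (ε n) (hε n)
  have hsum (n : ℕ) : ∑ t : T n, ediam (t : Set X) ^ B ≤ ENNReal.ofReal (C * A ^ B) := by
    have hε0 := (hε n).1
    calc ∑ t : T n, ediam (t : Set X) ^ B
        ≤ ∑ _t : T n, ENNReal.ofReal (A * ε n) ^ B :=
          Finset.sum_le_sum fun t _ => ENNReal.rpow_le_rpow (hTdiam n t t.2) hB
      _ = ENNReal.ofReal ((T n).card * (A * ε n) ^ B) := by
          rw [Finset.sum_const, Finset.card_univ, Fintype.card_coe, nsmul_eq_mul,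
            ENNReal.ofReal_rpow_of_nonneg (by positivity) hB, ENNReal.ofReal_mul (by positivity),
            ENNReal.ofReal_natCast]
      _ ≤ ENNReal.ofReal (C * ε n ^ (-B) * (A * ε n) ^ B) :=
          ENNReal.ofReal_le_ofReal (mul_le_mul_of_nonneg_right (hTcard n) (by positivity))
      _ = ENNReal.ofReal (C * A ^ B) := by
          rw [Real.mul_rpow hA hε0.le, Real.rpow_neg hε0.le]
          field_simp
  have hr : Tendsto (fun n => ENNReal.ofReal (A * ε n)) atTop (nhds 0) := by
    simpa [ε] using ENNReal.tendsto_ofReal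
      ((tendsto_one_div_add_atTop_nhds_zero_nat (𝕜 := ℝ)).const_mul A)
  have hμ : μH[B] s ≤ ENNReal.ofReal (C * A ^ B) :=
    calc μH[B] s ≤ liminf (fun n => ∑ t : T n, ediam (t : Set X) ^ B) atTop :=
          Measure.hausdorffMeasure_le_liminf_sum B s _ hr (fun n (t : T n) => (t : Set X))
            (Eventually.of_forall fun n t => hTdiam n t t.2)
            (Eventually.of_forall fun n => by simpa [sUnion_eq_iUnion] using hTcover n)
      _ ≤ ENNReal.ofReal (C * A ^ B) :=
          (liminf_le_liminf (Eventually.of_forall hsum)).trans (liminf_const _).le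
  rw [ENNReal.ofReal]
  apply dimH_le_of_hausdorffMeasure_ne_top
  rw [Real.coe_toNNReal B hB]
  exact ne_top_of_le_ne_top ENNReal.ofReal_ne_top hμ

theorem natCeil_add_one_le_mul_rpow {ε y K a : ℝ} (hε0 : 0 < ε) (hε1 : ε ≤ 1) (hK : 0 ≤ K)
    (hy0 : 0 ≤ y) (hy : y ≤ K * ε ^ (-a)) : (⌈y⌉₊ + 1 : ℝ) ≤ (K + 2) * ε ^ (-max 0 a) := by
  have hmono : ε ^ (-a) ≤ ε ^ (-max 0 a) :=
    Real.rpow_le_rpow_of_exponent_ge hε0 hε1 (neg_le_neg (le_max_right 0 a))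
  have hone : 1 ≤ ε ^ (-max 0 a) :=
    Real.one_le_rpow_of_pos_of_le_one_of_nonpos hε0 hε1 (neg_nonpos.2 (le_max_left 0 a))
  nlinarith [Nat.ceil_lt_add_one hy0, mul_le_mul_of_nonneg_left hmono hK]

theorem pow_mul_prod_le_mul_rpow {κ : Type*} [Fintype κ] {ε N K a : ℝ} {M L b : κ → ℝ}
    (hε : 0 < ε) (hN0 : 0 ≤ N) (hN : N ≤ K * ε ^ (-a)) (hM0 : ∀ i, 0 ≤ M i)
    (hM : ∀ i, M i ≤ L i * ε ^ (-b i)) (n : ℕ) :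
    N ^ n * ∏ i, M i ≤ (K ^ n * ∏ i, L i) * ε ^ (-(a * n + ∑ i, b i)) :=
  calc N ^ n * ∏ i, M i ≤ (K * ε ^ (-a)) ^ n * ∏ i, (L i * ε ^ (-b i)) :=
        mul_le_mul (pow_le_pow_left₀ hN0 hN n)
          (Finset.prod_le_prod (fun i _ => hM0 i) fun i _ => hM i)
          (Finset.prod_nonneg fun i _ => hM0 i) (pow_nonneg (hN0.trans hN) n)
    _ = (K ^ n * ∏ i, L i) * ε ^ (-(a * n + ∑ i, b i)) := by
        rw [neg_add, Real.rpow_add hε, ← neg_mul, Real.rpow_mul_natCast hε.le,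
          ← Finset.sum_neg_distrib, Real.rpow_sum_of_pos hε, mul_pow, Finset.prod_mul_distrib]
        ring

theorem natCeil_rpow_neg_add_one_le {ε a : ℝ} (hε0 : 0 < ε) (hε1 : ε ≤ 1) (ha : 0 ≤ a) :
    (⌈ε ^ (-a)⌉₊ + 1 : ℝ) ≤ 3 * ε ^ (-a) := by
  have := natCeil_add_one_le_mul_rpow hε0 hε1 zero_le_one (by positivity)
    (le_of_eq (one_mul (ε ^ (-a))).symm)
  rwa [max_eq_right ha, show (1 : ℝ) + 2 = 3 by norm_num] at this

theorem natCeil_two_mul_rpow_div_add_one_le {ε β c s a : ℝ} (hε0 : 0 < ε) (hε1 : ε ≤ 1)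
    (hc : 0 ≤ c) (hs : 0 ≤ s) :
    (⌈2 * (c * (s * ε ^ β⁻¹) ^ a) / ε⌉₊ + 1 : ℝ) ≤
      (2 * c * s ^ a + 2) * ε ^ (-max 0 (1 - a / β)) := by
  refine natCeil_add_one_le_mul_rpow hε0 hε1 (by positivity) (by positivity) (le_of_eq ?_)
  rw [div_eq_mul_inv, Real.mul_rpow hs (by positivity), ← Real.rpow_mul hε0.le, neg_sub,
    sub_eq_add_neg, Real.rpow_add hε0, Real.rpow_neg_one, div_eq_inv_mul a]
  ring

section HolderGraph

open EuclideanSpace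

variable {ι κ : Type*} [Fintype ι] {f : EuclideanSpace ℝ ι → EuclideanSpace ℝ κ}

theorem graph_subset_iUnion_cube_prod_cube {N : ℕ} (hN : 0 < N) {ε : ℝ} (hε : 0 < ε)
    (hNε : (N : ℝ)⁻¹ ≤ ε) {R : κ → ℝ}
    (hR : ∀ i, ∀ x ∈ unitCube ι, ∀ y ∈ unitCube ι,
      dist x y ≤ √(Fintype.card ι) * (N : ℝ)⁻¹ → |f x i - f y i| ≤ R i) :
    (fun x => (x, f x)) '' unitCube ι ⊆
      ⋃ kl : (ι → Fin (N + 1)) × (∀ i, Fin (⌈2 * R i / ε⌉₊ + 1)),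
        let p := gridPoint 0 (N : ℝ)⁻¹ fun a => kl.1 a
        cube p ε ×ˢ cube (gridPoint (fun i => f p i - R i) ε fun i => kl.2 i) ε := by
  rintro _ ⟨x, hx, rfl⟩
  obtain ⟨k, hpK, hxk⟩ := exists_mem_cube_gridPoint_unitCube hN hx
  set p := gridPoint 0 (N : ℝ)⁻¹ fun a => k a
  have hosc (i : κ) : |f x i - f p i| ≤ R i :=
    hR i x hx p hpK (dist_le_of_mem_cube (by positivity) hxk)
  obtain ⟨l, hl⟩ := exists_mem_cube_gridPoint (M := fun i => ⌈2 * R i / ε⌉₊)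
    (a := fun i => f p i - R i) hε (y := f x) fun i => by
      have := (div_le_iff₀ hε).1 (Nat.le_ceil (2 * R i / ε))
      constructor <;> linarith [abs_le.1 (hosc i)]
  exact mem_iUnion.2 ⟨(k, l), cube_mono hNε hxk, hl⟩

theorem exists_finset_cover_graph [Fintype κ] {α : κ → ℝ} {c β : ℝ} (hβ0 : 0 < β) (hβ1 : β ≤ 1)
    (hα : ∀ i, 0 ≤ α i) (hc : 0 ≤ c)
    (hf : ∀ i, ∀ x ∈ unitCube ι, ∀ y ∈ unitCube ι, |f x i - f y i| ≤ c * ‖x - y‖ ^ α i)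
    {ε : ℝ} (hε0 : 0 < ε) (hε1 : ε ≤ 1) :
    ∃ T : Finset (Set (EuclideanSpace ℝ ι × EuclideanSpace ℝ κ)),
      (fun x => (x, f x)) '' unitCube ι ⊆ ⋃₀ ↑T ∧
      (∀ t ∈ T, ediam t ≤ ENNReal.ofReal (2 * (√(Fintype.card ι) + √(Fintype.card κ)) * ε)) ∧
      (T.card : ℝ) ≤ (3 ^ Fintype.card ι * ∏ i, (2 * c * √(Fintype.card ι) ^ α i + 2)) *
        ε ^ (-(β⁻¹ * Fintype.card ι + ∑ i, max 0 (1 - α i / β))) := by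
  classical
  set n := Fintype.card ι
  set N := ⌈ε ^ (-β⁻¹)⌉₊
  set R : κ → ℝ := fun i => c * (√n * ε ^ β⁻¹) ^ α i
  set M : κ → ℕ := fun i => ⌈2 * R i / ε⌉₊
  have hN : 0 < N := Nat.ceil_pos.2 (by positivity)
  have hNinv : (N : ℝ)⁻¹ ≤ ε ^ β⁻¹ := inv_le_of_inv_le₀ (by positivity)
    (by rw [← Real.rpow_neg hε0.le]; exact Nat.le_ceil _)
  have hNε : (N : ℝ)⁻¹ ≤ ε := hNinv.trans <| by
    simpa using Real.rpow_le_rpow_of_exponent_ge hε0 hε1 (one_le_inv₀ hβ0 |>.2 hβ1)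
  have hR (i : κ) (x : EuclideanSpace ℝ ι) (hx : x ∈ unitCube ι) (y : EuclideanSpace ℝ ι)
      (hy : y ∈ unitCube ι) (hxy : dist x y ≤ √n * (N : ℝ)⁻¹) : |f x i - f y i| ≤ R i := by
    refine (hf i x hx y hy).trans (mul_le_mul_of_nonneg_left ?_ hc)
    rw [← dist_eq_norm]
    exact Real.rpow_le_rpow dist_nonneg (hxy.trans (by gcongr)) (hα i)
  set t : (ι → Fin (N + 1)) × (∀ i, Fin (M i + 1)) → Set _ := fun kl =>
    let p := gridPoint 0 (N : ℝ)⁻¹ fun a => kl.1 a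
    cube p ε ×ˢ cube (gridPoint (fun i => f p i - R i) ε fun i => kl.2 i) ε
  refine ⟨Finset.univ.image t, ?_, ?_, ?_⟩
  · rw [Finset.coe_image, Finset.coe_univ, image_univ, sUnion_range]
    exact graph_subset_iUnion_cube_prod_cube hN hε0 hNε hR
  · simp only [Finset.mem_image, Finset.mem_univ, true_and, forall_exists_index,
      forall_apply_eq_imp_iff]
    exact fun kl => ediam_cube_prod_cube_le _ _ hε0.le
  calc ((Finset.univ.image t).card : ℝ)
      ≤ Fintype.card ((ι → Fin (N + 1)) × (∀ i, Fin (M i + 1))) :=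
        Nat.cast_le.2 Finset.card_image_le
    _ = ((N : ℝ) + 1) ^ n * ∏ i, ((M i : ℝ) + 1) := by
        simp [n, Fintype.card_prod, Fintype.card_pi]
    _ ≤ _ := pow_mul_prod_le_mul_rpow hε0 (by positivity)
        (natCeil_rpow_neg_add_one_le hε0 hε1 (by positivity)) (fun i => by positivity)
        (fun i => natCeil_two_mul_rpow_div_add_one_le hε0 hε1 hc (Real.sqrt_nonneg _)) n

theorem dimH_graph_le_of_holder [Fintype κ] {α : κ → ℝ} {c β : ℝ} (hβ0 : 0 < β) (hβ1 : β ≤ 1)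
    (hα : ∀ i, 0 ≤ α i) (hc : 0 ≤ c)
    (hf : ∀ i, ∀ x ∈ unitCube ι, ∀ y ∈ unitCube ι, |f x i - f y i| ≤ c * ‖x - y‖ ^ α i) :
    dimH ((fun x => (x, f x)) '' unitCube ι) ≤
      ENNReal.ofReal (β⁻¹ * Fintype.card ι + ∑ i, max 0 (1 - α i / β)) :=
  dimH_le_of_forall_finset_cover (by positivity)
    (add_nonneg (by positivity) (Finset.sum_nonneg fun i _ => le_max_left _ _))
    fun _ hε => exists_finset_cover_graph hβ0 hβ1 hα hc hf hε.1 hε.2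

end HolderGraph

theorem sum_max_zero_one_sub_div_of_monotone {ι : Type*} [Fintype ι] [LinearOrder ι]
    [LocallyFiniteOrderBot ι] {α : ι → ℝ} (hα : Monotone α) {j : ι} (hj : 0 < α j) :
    ∑ i, max 0 (1 - α i / α j) = (∑ i ∈ Finset.Iic j, (α j - α i)) / α j := by
  calc ∑ i, max 0 (1 - α i / α j) = ∑ i ∈ Finset.Iic j, max 0 (1 - α i / α j) := by
        refine (Finset.sum_subset (Finset.subset_univ _) fun i _ hi => max_eq_left ?_).symm
        rw [Finset.mem_Iic, not_le] at hi
        exact sub_nonpos.2 ((one_le_div hj).2 (hα hi.le))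
    _ = ∑ i ∈ Finset.Iic j, (α j - α i) / α j := by
        refine Finset.sum_congr rfl fun i hi => ?_
        rw [max_eq_right (sub_nonneg.2 ((div_le_one hj).2 (hα (Finset.mem_Iic.1 hi)))), sub_div,
          div_self hj.ne']
    _ = (∑ i ∈ Finset.Iic j, (α j - α i)) / α j := (Finset.sum_div _ _ _).symm

theorem stmt12_general (d m : ℕ) [NeZero m]
    (α : Fin m → ℝ) (hαpos : ∀ i, 0 < α i) (hα1 : ∀ i, α i ≤ 1)
    (hαmono : Monotone α)
    (f : EuclideanSpace ℝ (Fin d) → EuclideanSpace ℝ (Fin m)) (c : ℝ) (hc : 0 < c)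
    (K : Set (EuclideanSpace ℝ (Fin d)))
    (hK : K = {x | ∀ i, x i ∈ Set.Icc (0:ℝ) 1})
    (hf : ∀ i, ∀ x ∈ K, ∀ y ∈ K, |f x i - f y i| ≤ c * ‖x - y‖ ^ (α i)) :
    dimH ((fun x => (x, f x)) '' K) ≤ ENNReal.ofReal (min
      (Finset.univ.inf' Finset.univ_nonempty (fun j : Fin m =>
        ((d : ℝ) + ∑ i ∈ Finset.Iic j, (α j - α i)) / α j))
      ((d : ℝ) + ∑ i, (1 - α i))) := by
  subst hK
  have hgraph {β : ℝ} (hβ0 : 0 < β) (hβ1 : β ≤ 1) :=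
    dimH_graph_le_of_holder hβ0 hβ1 (fun i => (hαpos i).le) hc.le hf
  obtain ⟨j, -, hj⟩ := Finset.exists_mem_eq_inf' Finset.univ_nonempty
    fun j : Fin m => ((d : ℝ) + ∑ i ∈ Finset.Iic j, (α j - α i)) / α j
  rw [ENNReal.ofReal_min, hj]
  refine le_min ((hgraph (hαpos j) (hα1 j)).trans_eq ?_) ((hgraph one_pos le_rfl).trans_eq ?_)
    <;> congr 1
  · rw [Fintype.card_fin, sum_max_zero_one_sub_div_of_monotone hαmono (hαpos j), add_div,
      inv_mul_eq_div]
  · simp only [inv_one, one_mul, div_one, Fintype.card_fin]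
    exact congrArg _ (Finset.sum_congr rfl fun i _ => max_eq_right (sub_nonneg.2 (hα1 i)))

theorem stmt12 (d m : ℕ) (hd : 1 ≤ d) (hm : 1 ≤ m) [NeZero m]
    (α : Fin m → ℝ) (hαpos : ∀ i, 0 < α i) (hα1 : ∀ i, α i ≤ 1)
    (hαmono : Monotone α)
    (f : EuclideanSpace ℝ (Fin d) → EuclideanSpace ℝ (Fin m)) (c : ℝ) (hc : 0 < c)
    (K : Set (EuclideanSpace ℝ (Fin d)))
    (hK : K = {x | ∀ i, x i ∈ Set.Icc (0:ℝ) 1})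
    (hf : ∀ i, ∀ x ∈ K, ∀ y ∈ K, |f x i - f y i| ≤ c * ‖x - y‖ ^ (α i)) :
    dimH ((fun x => (x, f x)) '' K) ≤ ENNReal.ofReal (min
      (Finset.univ.inf' Finset.univ_nonempty (fun j : Fin m =>
        ((d : ℝ) + ∑ i ∈ Finset.Iic j, (α j - α i)) / α j))
      ((d : ℝ) + ∑ i, (1 - α i))) :=
  stmt12_general d m α hαpos hα1 hαmono f c hc K hK hf
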